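/- Let X be a Tychonoff space, let Z be a closed subspace of X, and let V(X) be the free topological vector space over X. Then the linear span V(Z,X) of i(Z) in V(X) is a closed vector subspace of V(X). -/

import Mathlib

open Topology Set

universe u v w

/-- `IsFreeTVS V i` says that the (real) topological vector space `V` together with the
continuous map `i : X → V` is the free topological vector space over `X`: every continuous
map from `X` to a topological vector space `E` extends uniquely to a continuous linear
operator `V →L[ℝ] E`. -/
def IsFreeTVS {X : Type u} [TopologicalSpace X] (V : Type v) [AddCommGroup V] [Module ℝ V]
    [TopologicalSpace V] [IsTopologicalAddGroup V] [ContinuousSMul ℝ V] (i : X → V) : Prop :=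
  Continuous i ∧
    ∀ (E : Type w) [AddCommGroup E] [Module ℝ E] [TopologicalSpace E]
      [IsTopologicalAddGroup E] [ContinuousSMul ℝ E] (f : X → E),
      Continuous f → ∃! g : V →L[ℝ] E, ∀ x, g (i x) = f x

/-- `SPn i n` is the set `SP_n(X) = {λ₁x₁ + ⋯ + λₙxₙ : λᵢ ∈ [−n,n], xᵢ ∈ X}` inside `V`. -/
def SPn {X : Type u} {V : Type v} [AddCommGroup V] [Module ℝ V]
    (i : X → V) (n : ℕ) : Set V :=
  {v | ∃ (c : Fin n → ℝ) (x : Fin n → X),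
    (∀ j, c j ∈ Set.Icc (-(n : ℝ)) (n : ℝ)) ∧ v = ∑ j, c j • i (x j)}

/-!
Every continuous `φ : X → ℝ` extends to a continuous functional on `V`, and `V` is spanned
algebraically by `range i`. So if `v = ∑ cₓ • i x` has a nonzero coefficient at some `x₀ ∉ Z`,
a Tychonoff function equal to `1` at `x₀` and to `0` on `Z` and on the rest of the support of `c`
extends to a continuous functional that kills `span ℝ (i '' Z)` but not `v`. Hence the span is an
intersection of closed hyperplanes.
-/

theorem Submodule.isClosed_of_forall_notMem_exists_continuousLinearMap
    {R M N : Type*} [Semiring R] [AddCommMonoid M] [Module R M] [TopologicalSpace M]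
    [AddCommMonoid N] [Module R N] [TopologicalSpace N] [T1Space N] (W : Submodule R M)
    (h : ∀ v ∉ W, ∃ g : M →L[R] N, (∀ w ∈ W, g w = 0) ∧ g v ≠ 0) :
    IsClosed (W : Set M) := by
  refine isOpen_compl_iff.mp (isOpen_iff_forall_mem_open.mpr fun v hv => ?_)
  obtain ⟨g, hgW, hgv⟩ := h v hv
  exact ⟨g ⁻¹' {0}ᶜ, fun u hu huW => hu (hgW u huW),
    isClosed_singleton.isOpen_compl.preimage g.continuous, hgv⟩

theorem CompletelyRegularSpace.exists_continuous_real_eq_one_eqOn_zero {X : Type*}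
    [TopologicalSpace X] [CompletelyRegularSpace X] {x : X} {K : Set X} (hK : IsClosed K)
    (hx : x ∉ K) : ∃ φ : X → ℝ, Continuous φ ∧ φ x = 1 ∧ EqOn φ 0 K := by
  obtain ⟨f, hf, hfx, hfK⟩ := CompletelyRegularSpace.completely_regular x K hK hx
  refine ⟨fun y => 1 - f y, continuous_const.sub (continuous_subtype_val.comp hf), by simp [hfx],
    fun y hy => ?_⟩
  simp [hfK hy]

namespace IsFreeTVS

variable {X : Type u} [TopologicalSpace X] {V : Type v} [AddCommGroup V] [Module ℝ V]
  [TopologicalSpace V] [IsTopologicalAddGroup V] [ContinuousSMul ℝ V] {i : X → V}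

theorem exists_lift_real (hV : IsFreeTVS.{u, v, w} V i) {f : X → ℝ} (hf : Continuous f) :
    ∃ g : V →L[ℝ] ℝ, ∀ x, g (i x) = f x := by
  obtain ⟨g, hg, -⟩ := hV.2 (ULift.{w} ℝ) (fun x => ULift.up (f x)) (continuous_uliftUp.comp hf)
  exact ⟨ContinuousLinearEquiv.ulift.toContinuousLinearMap.comp g,
    fun x => congrArg ULift.down (hg x)⟩

theorem span_range_eq_top (hV : IsFreeTVS.{u, v, w} V i) : Submodule.span ℝ (range i) = ⊤ := by
  refine eq_top_iff.mpr fun v _ => by_contra fun hv => ?_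
  obtain ⟨ℓ, hℓv, hℓ⟩ := Submodule.exists_dual_map_eq_bot_of_notMem hv inferInstance
  -- For the indiscrete topology `ℓ` is continuous, so uniqueness of extensions forces `ℓ = 0`.
  let _ : TopologicalSpace (ULift.{w} ℝ) := ⊤
  have : IsTopologicalAddGroup (ULift.{w} ℝ) :=
    { continuous_add := continuous_top, continuous_neg := continuous_top }
  have : ContinuousSMul ℝ (ULift.{w} ℝ) := ⟨continuous_top⟩
  let q : V →L[ℝ] ULift.{w} ℝ := ⟨ULift.moduleEquiv.symm.toLinearMap ∘ₗ ℓ, continuous_top⟩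
  have hq : ∀ x, q (i x) = 0 := fun x =>
    congrArg ULift.up (LinearMap.le_ker_iff_map.mpr hℓ (Submodule.subset_span (mem_range_self x)))
  obtain ⟨g, -, hg⟩ := hV.2 (ULift.{w} ℝ) (fun _ => 0) continuous_const
  have hq0 : q = 0 := (hg q hq).trans (hg 0 fun _ => rfl).symm
  exact hℓv (congrArg ULift.down (DFunLike.congr_fun hq0 v))

theorem exists_continuousLinearMap_separating_span_image (hV : IsFreeTVS.{u, v, w} V i)
    [T1Space X] [CompletelyRegularSpace X] {Z : Set X} (hZ : IsClosed Z) {v : V}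
    (hv : v ∉ Submodule.span ℝ (i '' Z)) :
    ∃ g : V →L[ℝ] ℝ, (∀ u ∈ Submodule.span ℝ (i '' Z), g u = 0) ∧ g v ≠ 0 := by
  classical
  obtain ⟨c, rfl⟩ : v ∈ LinearMap.range (Finsupp.linearCombination ℝ i) := by
    rw [Finsupp.range_linearCombination, hV.span_range_eq_top]
    trivial
  obtain ⟨x₀, hx₀c, hx₀Z⟩ : ∃ x₀ ∈ c.support, x₀ ∉ Z := by
    by_contra! hcZ
    exact hv ((Finsupp.mem_span_image_iff_linearCombination ℝ).mpr
      ⟨c, (Finsupp.mem_supported ℝ c).mpr hcZ, rfl⟩)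
  obtain ⟨φ, hφ, hφx₀, hφK⟩ := CompletelyRegularSpace.exists_continuous_real_eq_one_eqOn_zero
    (hZ.union (c.support.erase x₀).finite_toSet.isClosed) (x := x₀) (by simp [hx₀Z])
  obtain ⟨g, hg⟩ := hV.exists_lift_real hφ
  have hgZ : Submodule.span ℝ (i '' Z) ≤ LinearMap.ker (g : V →ₗ[ℝ] ℝ) :=
    Submodule.span_le.mpr <| by
      rintro _ ⟨z, hz, rfl⟩
      simp [hg, hφK (Or.inl hz)]
  have hgc : g (Finsupp.linearCombination ℝ i c) = c x₀ :=
    calc g (Finsupp.linearCombination ℝ i c) = c.sum fun x a => a * φ x := by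
          simp [Finsupp.linearCombination_apply, map_finsuppSum, hg]
      _ = c x₀ := by
          rw [Finsupp.sum_eq_single x₀ (fun x hx hne => by
            rw [hφK (Or.inr (Finset.mem_erase.mpr ⟨hne, Finsupp.mem_support_iff.mpr hx⟩)),
              Pi.zero_apply, mul_zero])
            (by simp), hφx₀, mul_one]
  exact ⟨g, fun u hu => hgZ hu, hgc ▸ Finsupp.mem_support_iff.mp hx₀c⟩

end IsFreeTVS

/-- If `Z` is a closed subspace of a Tychonoff space `X` and `(V, i)` is the
free topological vector space over `X`, then the linear span `V(Z,X)` of `i(Z)` in `V` is a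
closed vector subspace of `V`. -/
theorem isClosed_span_of_isClosed
    {X : Type u} [TopologicalSpace X] [T35Space X]
    (Z : Set X) (hZ : IsClosed Z)
    (V : Type v) [AddCommGroup V] [Module ℝ V] [TopologicalSpace V]
    [IsTopologicalAddGroup V] [ContinuousSMul ℝ V] (i : X → V)
    (hV : IsFreeTVS V i) :
    IsClosed ((Submodule.span ℝ (i '' Z) : Submodule ℝ V) : Set V) :=
  Submodule.isClosed_of_forall_notMem_exists_continuousLinearMap _ fun _ hv =>
    hV.exists_continuousLinearMap_separating_span_image hZ hv
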